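/- For a domain X, the poset FX of Scott-open filters of X, ordered by inclusion, is a continuous dcpo in which the way-below relation is characterized by: β ≪ α in FX iff there exists x ∈ X with x ∈ α and β ⊆ ↑x. -/

import Mathlib

def IsDcpoP (X : Type*) [Preorder X] : Prop :=
  ∀ D : Set X, D.Nonempty → DirectedOn (· ≤ ·) D → ∃ s, IsLUB D s

def wayBelow {X : Type*} [Preorder X] (y x : X) : Prop :=
  ∀ D : Set X, D.Nonempty → DirectedOn (· ≤ ·) D →
    ∀ s, IsLUB D s → x ≤ s → ∃ d ∈ D, y ≤ d

/-- A domain: a continuous dcpo. -/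
def IsContDomain (X : Type*) [Preorder X] : Prop :=
  IsDcpoP X ∧
  ∀ x : X, ({y | wayBelow y x}).Nonempty ∧
    DirectedOn (· ≤ ·) {y | wayBelow y x} ∧ IsLUB {y | wayBelow y x} x

def IsScottOpenFilter {X : Type*} [Preorder X] (α : Set X) : Prop :=
  α.Nonempty ∧
  (∀ ⦃a b : X⦄, a ≤ b → a ∈ α → b ∈ α) ∧
  (∀ a ∈ α, ∀ b ∈ α, ∃ c ∈ α, c ≤ a ∧ c ≤ b) ∧
  (∀ D : Set X, D.Nonempty → DirectedOn (· ≤ ·) D →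
    ∀ s, IsLUB D s → s ∈ α → ∃ d ∈ D, d ∈ α)

/-- The poset of Scott-open filters of `X`, ordered by inclusion. -/
abbrev SOF (X : Type*) [Preorder X] := {α : Set X // IsScottOpenFilter α}

/-
The way-below relation of a domain interpolates, so from `w ≪ z` one gets a sequence
`z = f 0 ≫ f 1 ≫ f 2 ≫ ⋯`, all of it above `w`; the union of the sets `↟(f n)` is a Scott-open
filter containing `z` and contained in `↑w`. Hence the filters lying inside `↑x` for some
`x ∈ α` form a directed family with union `α`. Directed suprema in `FX` are unions, so such a
filter is way below `α`; conversely, any `β ≪ α` lies below a member of this family.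
-/

section WayBelow

variable {X : Type*} [Preorder X]

theorem wayBelow.le {y x : X} (h : wayBelow y x) : y ≤ x := by
  obtain ⟨d, rfl, hyd⟩ := h {x} (Set.singleton_nonempty x) (directedOn_singleton x)
    x isLUB_singleton le_rfl
  exact hyd

theorem wayBelow.mono {y' y x x' : X} (h : wayBelow y x) (hy : y' ≤ y) (hx : x ≤ x') :
    wayBelow y' x' := fun D hD hdD s hs hxs =>
  let ⟨d, hd, hyd⟩ := h D hD hdD s hs (hx.trans hxs)
  ⟨d, hd, hy.trans hyd⟩

theorem IsContDomain.exists_wayBelow_wayBelow (hX : IsContDomain X) {y x : X}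
    (h : wayBelow y x) : ∃ z, wayBelow y z ∧ wayBelow z x := by
  obtain ⟨hne, hdir, hlub⟩ := hX.2 x
  let D : Set X := {z | ∃ w, wayBelow z w ∧ wayBelow w x}
  have hD_nonempty : D.Nonempty := by
    obtain ⟨w, hw⟩ := hne
    obtain ⟨z, hz⟩ := (hX.2 w).1
    exact ⟨z, w, hz, hw⟩
  have hD_directed : DirectedOn (· ≤ ·) D := by
    rintro z₁ ⟨w₁, hz₁, hw₁⟩ z₂ ⟨w₂, hz₂, hw₂⟩
    obtain ⟨w, hw, hw₁w, hw₂w⟩ := hdir w₁ hw₁ w₂ hw₂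
    obtain ⟨hne', hdir', hlub'⟩ := hX.2 w
    obtain ⟨d₁, hd₁, hzd₁⟩ := (hz₁.mono le_rfl hw₁w) _ hne' hdir' w hlub' le_rfl
    obtain ⟨d₂, hd₂, hzd₂⟩ := (hz₂.mono le_rfl hw₂w) _ hne' hdir' w hlub' le_rfl
    obtain ⟨d, hd, hd₁d, hd₂d⟩ := hdir' d₁ hd₁ d₂ hd₂
    exact ⟨d, ⟨w, hd, hw⟩, hzd₁.trans hd₁d, hzd₂.trans hd₂d⟩
  have hD_lub : IsLUB D x := by
    refine ⟨fun z ⟨w, hzw, hwx⟩ => hzw.le.trans hwx.le, fun u hu => hlub.2 fun w hw => ?_⟩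
    exact (hX.2 w).2.2.2 fun z hz => hu ⟨w, hz, hw⟩
  obtain ⟨d, ⟨w, hdw, hwx⟩, hyd⟩ := h D hD_nonempty hD_directed x hD_lub le_rfl
  exact ⟨w, hdw.mono hyd le_rfl, hwx⟩

theorem IsContDomain.exists_seq_wayBelow (hX : IsContDomain X) {w z : X} (h : wayBelow w z) :
    ∃ f : ℕ → X, f 0 = z ∧ (∀ n, wayBelow w (f n)) ∧ ∀ n, wayBelow (f (n + 1)) (f n) := by
  choose g hwg hgp using fun p : {p // wayBelow w p} => hX.exists_wayBelow_wayBelow p.2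
  let F : ℕ → {p // wayBelow w p} := fun n => (fun p => ⟨g p, hwg p⟩)^[n] ⟨z, h⟩
  refine ⟨fun n => (F n).1, rfl, fun n => (F n).2, fun n => ?_⟩
  simp only [F, Function.iterate_succ_apply']
  exact hgp (F n)

end WayBelow

section ScottOpenFilter

variable {X : Type*} [Preorder X]

theorem IsScottOpenFilter.mem_of_le {α : Set X} (hα : IsScottOpenFilter α) {a b : X}
    (hab : a ≤ b) (ha : a ∈ α) : b ∈ α :=
  hα.2.1 hab ha

theorem IsScottOpenFilter.exists_wayBelow_mem (hX : IsContDomain X) {α : Set X}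
    (hα : IsScottOpenFilter α) {z : X} (hz : z ∈ α) : ∃ w ∈ α, wayBelow w z := by
  obtain ⟨hne, hdir, hlub⟩ := hX.2 z
  obtain ⟨w, hwz, hwα⟩ := hα.2.2.2 _ hne hdir z hlub hz
  exact ⟨w, hwα, hwz⟩

theorem IsContDomain.exists_isScottOpenFilter_mem_subset_Ici (hX : IsContDomain X) {w z : X}
    (h : wayBelow w z) : ∃ G : Set X, IsScottOpenFilter G ∧ z ∈ G ∧ G ⊆ Set.Ici w := by
  obtain ⟨f, rfl, hwf, hf⟩ := hX.exists_seq_wayBelow h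
  have hanti : Antitone f := antitone_nat_of_succ_le fun n => (hf n).le
  let G : Set X := {y | ∃ n, wayBelow (f n) y}
  have hfG : ∀ n, f n ∈ G := fun n => ⟨n + 1, hf n⟩
  refine ⟨G, ⟨⟨_, hfG 0⟩, ?_, ?_, ?_⟩, hfG 0, fun y ⟨n, hn⟩ => (hwf n).le.trans hn.le⟩
  · rintro a b hab ⟨n, hn⟩
    exact ⟨n, hn.mono le_rfl hab⟩
  · rintro a ⟨n, hn⟩ b ⟨m, hm⟩
    exact ⟨f (max n m), hfG _, (hanti (le_max_left n m)).trans hn.le,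
      (hanti (le_max_right n m)).trans hm.le⟩
  · rintro D hD hdD s hs ⟨n, hn⟩
    obtain ⟨d, hd, hnd⟩ := hn D hD hdD s hs le_rfl
    exact ⟨d, hd, n + 1, (hf n).mono le_rfl hnd⟩

end ScottOpenFilter

namespace SOF

variable {X : Type*} [Preorder X]

theorem isScottOpenFilter_biUnion {G : Set (SOF X)} (hne : G.Nonempty)
    (hdir : DirectedOn (· ≤ ·) G) : IsScottOpenFilter (⋃ γ ∈ G, γ.1) := by
  obtain ⟨γ₀, hγ₀⟩ := hne
  obtain ⟨y₀, hy₀⟩ := γ₀.2.1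
  refine ⟨⟨y₀, Set.mem_biUnion hγ₀ hy₀⟩, ?_, ?_, ?_⟩
  · intro a b hab ha
    obtain ⟨γ, hγ, ha⟩ := Set.mem_iUnion₂.mp ha
    exact Set.mem_biUnion hγ (γ.2.mem_of_le hab ha)
  · intro a ha b hb
    obtain ⟨γ₁, hγ₁, ha⟩ := Set.mem_iUnion₂.mp ha
    obtain ⟨γ₂, hγ₂, hb⟩ := Set.mem_iUnion₂.mp hb
    obtain ⟨γ, hγ, hγ₁γ, hγ₂γ⟩ := hdir γ₁ hγ₁ γ₂ hγ₂
    obtain ⟨c, hc, hca, hcb⟩ := γ.2.2.2.1 a (hγ₁γ ha) b (hγ₂γ hb)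
    exact ⟨c, Set.mem_biUnion hγ hc, hca, hcb⟩
  · intro D hD hdD s hs hsG
    obtain ⟨γ, hγ, hsγ⟩ := Set.mem_iUnion₂.mp hsG
    obtain ⟨d, hd, hdγ⟩ := γ.2.2.2.2 D hD hdD s hs hsγ
    exact ⟨d, hd, Set.mem_biUnion hγ hdγ⟩

theorem isLUB_biUnion {G : Set (SOF X)} (hne : G.Nonempty) (hdir : DirectedOn (· ≤ ·) G) :
    IsLUB G (⟨⋃ γ ∈ G, γ.1, isScottOpenFilter_biUnion hne hdir⟩ : SOF X) :=
  ⟨fun _ hγ _ hy => Set.mem_biUnion hγ hy,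
    fun _ hu _ hy => let ⟨_, hγ, hyγ⟩ := Set.mem_iUnion₂.mp hy; hu hγ hyγ⟩

theorem wayBelow_iff_forall_subset_biUnion (α β : SOF X) :
    wayBelow β α ↔ ∀ G : Set (SOF X), G.Nonempty → DirectedOn (· ≤ ·) G →
      α.1 ⊆ ⋃ γ ∈ G, γ.1 → ∃ γ ∈ G, β.1 ⊆ γ.1 := by
  refine ⟨fun h G hne hdir hαG => h G hne hdir _ (isLUB_biUnion hne hdir) hαG,
    fun h D hne hdir s hs hαs => h D hne hdir ?_⟩
  exact hαs.trans (hs.2 (isLUB_biUnion hne hdir).1)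

/-- The Scott-open filters contained in `↑x` for some `x ∈ α`: these turn out to be exactly the
filters way below `α`. -/
def approx (α : SOF X) : Set (SOF X) :=
  {γ | ∃ x ∈ α.1, γ.1 ⊆ Set.Ici x}

theorem subset_biUnion_approx (hX : IsContDomain X) (α : SOF X) :
    α.1 ⊆ ⋃ γ ∈ approx α, γ.1 := by
  intro y hy
  obtain ⟨w, hwα, hwy⟩ := α.2.exists_wayBelow_mem hX hy
  obtain ⟨G, hG, hyG, hGw⟩ := hX.exists_isScottOpenFilter_mem_subset_Ici hwy
  exact Set.mem_biUnion (x := ⟨G, hG⟩) ⟨w, hwα, hGw⟩ hyG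

theorem approx_nonempty (hX : IsContDomain X) (α : SOF X) : (approx α).Nonempty := by
  obtain ⟨y, hy⟩ := α.2.1
  obtain ⟨γ, hγ, -⟩ := Set.mem_iUnion₂.mp (subset_biUnion_approx hX α hy)
  exact ⟨γ, hγ⟩

theorem directedOn_approx (hX : IsContDomain X) (α : SOF X) :
    DirectedOn (· ≤ ·) (approx α) := by
  rintro γ₁ ⟨x₁, hx₁, hγ₁⟩ γ₂ ⟨x₂, hx₂, hγ₂⟩
  obtain ⟨z, hzα, hzx₁, hzx₂⟩ := α.2.2.2.1 x₁ hx₁ x₂ hx₂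
  obtain ⟨w, hwα, hwz⟩ := α.2.exists_wayBelow_mem hX hzα
  obtain ⟨G, hG, hzG, hGw⟩ := hX.exists_isScottOpenFilter_mem_subset_Ici hwz
  have hIci : Set.Ici z ⊆ G := fun y hzy => hG.mem_of_le hzy hzG
  exact ⟨⟨G, hG⟩, ⟨w, hwα, hGw⟩, hγ₁.trans ((Set.Ici_subset_Ici.2 hzx₁).trans hIci),
    hγ₂.trans ((Set.Ici_subset_Ici.2 hzx₂).trans hIci)⟩

theorem isLUB_approx (hX : IsContDomain X) (α : SOF X) : IsLUB (approx α) α := by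
  refine ⟨fun γ ⟨x, hx, hγ⟩ y hy => α.2.mem_of_le (hγ hy) hx, fun u hu y hy => ?_⟩
  obtain ⟨γ, hγ, hyγ⟩ := Set.mem_iUnion₂.mp (subset_biUnion_approx hX α hy)
  exact hu hγ hyγ

theorem forall_subset_biUnion_iff (hX : IsContDomain X) (α β : SOF X) :
    (∀ G : Set (SOF X), G.Nonempty → DirectedOn (· ≤ ·) G →
        α.1 ⊆ ⋃ γ ∈ G, γ.1 → ∃ γ ∈ G, β.1 ⊆ γ.1) ↔
      ∃ x ∈ α.1, β.1 ⊆ Set.Ici x := by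
  constructor
  · intro h
    obtain ⟨γ, ⟨x, hx, hγx⟩, hβγ⟩ :=
      h (approx α) (approx_nonempty hX α) (directedOn_approx hX α) (subset_biUnion_approx hX α)
    exact ⟨x, hx, hβγ.trans hγx⟩
  · rintro ⟨x, hx, hβx⟩ G - - hαG
    obtain ⟨γ, hγ, hxγ⟩ := Set.mem_iUnion₂.mp (hαG hx)
    exact ⟨γ, hγ, fun y hy => γ.2.mem_of_le (hβx hy) hxγ⟩

theorem setOf_wayBelow_eq_approx (hX : IsContDomain X) (α : SOF X) :
    {β | wayBelow β α} = approx α := by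
  ext β
  rw [Set.mem_ofPred_eq, wayBelow_iff_forall_subset_biUnion, forall_subset_biUnion_iff hX]
  rfl

end SOF

/-- For a domain `X`, the poset `FX` of Scott-open filters is a continuous dcpo
whose way-below relation (directed suprema in `FX` being unions) is:
`β ≪ α` iff there is `x ∈ α` with `β ⊆ ↑x`. -/
theorem stmt_16 {X : Type*} [PartialOrder X] (hX : IsContDomain X) :
    IsContDomain (SOF X) ∧
    ∀ α β : SOF X,
      ((∀ G : Set (SOF X), G.Nonempty → DirectedOn (· ≤ ·) G →
          α.1 ⊆ ⋃ γ ∈ G, γ.1 → ∃ γ ∈ G, β.1 ⊆ γ.1) ↔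
        ∃ x ∈ α.1, β.1 ⊆ {y | x ≤ y}) := by
  refine ⟨⟨fun D hne hdir => ⟨_, SOF.isLUB_biUnion hne hdir⟩, fun α => ?_⟩,
    SOF.forall_subset_biUnion_iff hX⟩
  rw [SOF.setOf_wayBelow_eq_approx hX α]
  exact ⟨SOF.approx_nonempty hX α, SOF.directedOn_approx hX α, SOF.isLUB_approx hX α⟩
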